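/- arXiv:quant-ph/0401162 — 6 statements merged into one kernel-verified Lean document; each statement's English description precedes it below -/
import Mathlib

section
/- Two unit vectors v, w : Fin 4 → ℂ can be interchanged by a real special orthogonal matrix if and only if vᵀv = wᵀw: there exists p : Matrix (Fin 4) (Fin 4) ℝ with pᵀ * p = 1 and det p = 1 such that (p.map Complex.ofReal).mulVec v = w, if and only if v ⬝ᵥ v = w ⬝ᵥ w (dot product without conjugation). -/
/-!
Write `v = a + i b` and `w = c + i d` with real `a, b, c, d`. Then
`v ⬝ᵥ v = |a|² - |b|² + 2i⟪a, b⟫` and `∑ ‖v i‖² = |a|² + |b|²`, so for unit vectors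
`v ⬝ᵥ v = w ⬝ᵥ w` says exactly that the pairs `(a, b)` and `(c, d)` have the same Gram matrix.
A real orthogonal matrix acts on `a` and `b` separately and preserves the bilinear form, which
gives one direction. Conversely, two reflections carry `(a, b)` to `(c, d)`; if the resulting
isometry has determinant `-1`, composing with the reflection in a vector orthogonal to `c` and
`d` (one exists because `4 > 2`) makes it special orthogonal.
-/

open Matrix Kronecker

noncomputable section

def σy : Matrix (Fin 2) (Fin 2) ℂ := !![0, -Complex.I; Complex.I, 0]

def eps (φ : Fin 2 × Fin 2 → ℂ) : ℂ := φ ⬝ᵥ ((σy ⊗ₖ σy).mulVec φ)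

def CNOT : Matrix (Fin 2 × Fin 2) (Fin 2 × Fin 2) ℂ :=
  Matrix.of fun p q => if p.1 = q.1 ∧ p.2 = q.1 + q.2 then 1 else 0

def e (i j : Fin 2) : Fin 2 × Fin 2 → ℂ := Pi.single (i, j) 1

def e₀ : Fin 2 × Fin 2 → ℂ := e 0 0

def Rz (θ : ℝ) : Matrix (Fin 2) (Fin 2) ℂ :=
  !![Complex.exp (Complex.I * θ / 2), 0; 0, Complex.exp (-Complex.I * θ / 2)]

def Rx (θ : ℝ) : Matrix (Fin 2) (Fin 2) ℂ :=
  !![(Real.cos (θ / 2) : ℂ), Complex.I * Real.sin (θ / 2);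
     Complex.I * Real.sin (θ / 2), (Real.cos (θ / 2) : ℂ)]

open Module RealInnerProductSpace

section Isometry

variable {E : Type*} [NormedAddCommGroup E] [InnerProductSpace ℝ E]

theorem LinearIsometryEquiv.det_eq_one_or_neg_one [FiniteDimensional ℝ E] (f : E ≃ₗᵢ[ℝ] E) :
    LinearMap.det f.toLinearMap = 1 ∨ LinearMap.det f.toLinearMap = -1 := by
  set b := stdOrthonormalBasis ℝ E
  rw [← LinearMap.det_toMatrix b.toBasis, ← sq_eq_one_iff]
  simpa [unitary, sq] using! Matrix.det_of_mem_unitary (f.toMatrix_mem_unitaryGroup b b)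

theorem Submodule.det_reflection_orthogonal_span_singleton [FiniteDimensional ℝ E] {u : E}
    (hu : u ≠ 0) : LinearMap.det (ℝ ∙ u)ᗮ.reflection.toLinearMap = -1 := by
  rw [det_reflection, orthogonal_orthogonal, finrank_span_singleton hu, pow_one]

theorem exists_linearIsometryEquiv_apply_eq_pair {a b c d : E} (hac : ‖a‖ = ‖c‖)
    (hbd : ‖b‖ = ‖d‖) (habcd : ⟪a, b⟫ = ⟪c, d⟫) : ∃ f : E ≃ₗᵢ[ℝ] E, f a = c ∧ f b = d := by
  set r₁ := (ℝ ∙ (a - c))ᗮ.reflection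
  have hr₁a : r₁ a = c := Submodule.reflection_sub hac
  have hr₁b : ‖r₁ b‖ = ‖d‖ := by rw [r₁.norm_map, hbd]
  set r₂ := (ℝ ∙ (r₁ b - d))ᗮ.reflection
  have hr₂c : r₂ c = c := by
    refine Submodule.reflection_mem_subspace_eq_self ?_
    rw [Submodule.mem_orthogonal_singleton_iff_inner_left, inner_sub_right, ← hr₁a,
      r₁.inner_map_map, hr₁a, habcd, sub_self]
  exact ⟨r₁.trans r₂, by simp [hr₁a, hr₂c], Submodule.reflection_sub hr₁b⟩

theorem exists_ne_zero_inner_eq_zero_pair [FiniteDimensional ℝ E] (hE : 2 < finrank ℝ E)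
    (c d : E) : ∃ u : E, u ≠ 0 ∧ ⟪u, c⟫ = 0 ∧ ⟪u, d⟫ = 0 := by
  set K := Submodule.span ℝ (Set.range ![c, d])
  have hK : finrank ℝ K ≤ 2 := (finrank_range_le_card ![c, d]).trans_eq (Fintype.card_fin 2)
  have hKo : Kᗮ ≠ ⊥ := by
    intro h
    have := K.finrank_add_finrank_orthogonal
    rw [h, finrank_bot] at this
    omega
  obtain ⟨u, hu, hu0⟩ := Submodule.exists_mem_ne_zero_of_ne_bot hKo
  exact ⟨u, hu0, K.inner_left_of_mem_orthogonal (Submodule.subset_span ⟨0, rfl⟩) hu,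
    K.inner_left_of_mem_orthogonal (Submodule.subset_span ⟨1, rfl⟩) hu⟩

theorem exists_linearIsometryEquiv_det_eq_one_apply_eq_pair [FiniteDimensional ℝ E]
    (hE : 2 < finrank ℝ E) {a b c d : E} (hac : ‖a‖ = ‖c‖) (hbd : ‖b‖ = ‖d‖)
    (habcd : ⟪a, b⟫ = ⟪c, d⟫) :
    ∃ f : E ≃ₗᵢ[ℝ] E, LinearMap.det f.toLinearMap = 1 ∧ f a = c ∧ f b = d := by
  obtain ⟨f, hfa, hfb⟩ := exists_linearIsometryEquiv_apply_eq_pair hac hbd habcd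
  rcases f.det_eq_one_or_neg_one with hf | hf
  · exact ⟨f, hf, hfa, hfb⟩
  obtain ⟨u, hu0, huc, hud⟩ := exists_ne_zero_inner_eq_zero_pair hE c d
  set r := (ℝ ∙ u)ᗮ.reflection
  have hr (x : E) (hx : ⟪u, x⟫ = 0) : r x = x :=
    Submodule.reflection_mem_subspace_eq_self
      (Submodule.mem_orthogonal_singleton_iff_inner_right.2 hx)
  refine ⟨f.trans r, ?_, by simp [hfa, hr c huc], by simp [hfb, hr d hud]⟩
  rw [show (f.trans r).toLinearMap = r.toLinearMap ∘ₗ f.toLinearMap from rfl, LinearMap.det_comp,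
    hf, Submodule.det_reflection_orthogonal_span_singleton hu0]
  norm_num

end Isometry

theorem exists_det_eq_one_mulVec_eq_pair {n : ℕ} (hn : 2 < n) {a b c d : Fin n → ℝ}
    (hac : a ⬝ᵥ a = c ⬝ᵥ c) (hbd : b ⬝ᵥ b = d ⬝ᵥ d) (habcd : a ⬝ᵥ b = c ⬝ᵥ d) :
    ∃ p : Matrix (Fin n) (Fin n) ℝ, pᵀ * p = 1 ∧ p.det = 1 ∧ p *ᵥ a = c ∧ p *ᵥ b = d := by
  have hinner (x y : Fin n → ℝ) : ⟪WithLp.toLp 2 x, WithLp.toLp 2 y⟫ = x ⬝ᵥ y := by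
    simp [EuclideanSpace.inner_toLp_toLp, dotProduct_comm]
  have hnorm (x y : Fin n → ℝ) (h : x ⬝ᵥ x = y ⬝ᵥ y) :
      ‖WithLp.toLp 2 x‖ = ‖WithLp.toLp 2 y‖ := by
    rw [norm_eq_sqrt_real_inner, norm_eq_sqrt_real_inner, hinner, hinner, h]
  obtain ⟨f, hf, hfa, hfb⟩ := exists_linearIsometryEquiv_det_eq_one_apply_eq_pair
    (E := EuclideanSpace ℝ (Fin n)) (by simpa using hn) (hnorm a c hac) (hnorm b d hbd)
    (by rw [hinner, hinner, habcd])
  set B := EuclideanSpace.basisFun (Fin n) ℝ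
  set p := LinearMap.toMatrix B.toBasis B.toBasis f.toLinearMap
  have hp (x : Fin n → ℝ) : p *ᵥ x = (f (WithLp.toLp 2 x)).ofLp :=
    LinearMap.toMatrix_mulVec_repr B.toBasis B.toBasis f.toLinearMap (WithLp.toLp 2 x)
  refine ⟨p, ?_, by rw [LinearMap.det_toMatrix, hf], by rw [hp, hfa], by rw [hp, hfb]⟩
  simpa [Matrix.mem_unitaryGroup_iff', Matrix.star_eq_conjTranspose] using
    f.toMatrix_mem_unitaryGroup B B

section BilinearDotProduct

variable {ι m : Type*} [Fintype ι]

theorem Matrix.dotProduct_mulVec_self_of_transpose_mul_self_eq_one {R : Type*}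
    [CommSemiring R] [DecidableEq ι] {A : Matrix ι ι R} (hA : Aᵀ * A = 1) (v : ι → R) :
    (A *ᵥ v) ⬝ᵥ (A *ᵥ v) = v ⬝ᵥ v := by
  rw [dotProduct_mulVec, ← vecMul_transpose, vecMul_vecMul, hA, vecMul_one]

theorem Matrix.transpose_map_mul_map_eq_one {R S : Type*} [CommSemiring R] [CommSemiring S]
    [DecidableEq ι] (f : R →+* S) {A : Matrix ι ι R} (hA : Aᵀ * A = 1) :
    (A.map f)ᵀ * A.map f = 1 := by
  rw [← transpose_map, ← Matrix.map_mul, hA, Matrix.map_one _ f.map_zero f.map_one]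

namespace Complex

theorem sum_norm_sq_eq_dotProduct (v : ι → ℂ) :
    ∑ i, ‖v i‖ ^ 2 = (re ∘ v) ⬝ᵥ (re ∘ v) + (im ∘ v) ⬝ᵥ (im ∘ v) := by
  simp [dotProduct, ← Finset.sum_add_distrib, Complex.sq_norm, normSq_apply]

theorem re_dotProduct_self (v : ι → ℂ) :
    (v ⬝ᵥ v).re = (re ∘ v) ⬝ᵥ (re ∘ v) - (im ∘ v) ⬝ᵥ (im ∘ v) := by
  simp [dotProduct, re_sum, ← Finset.sum_sub_distrib]

theorem im_dotProduct_self (v : ι → ℂ) : (v ⬝ᵥ v).im = 2 * ((re ∘ v) ⬝ᵥ (im ∘ v)) := by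
  simp only [dotProduct, im_sum, mul_im, Finset.mul_sum, Function.comp_apply]
  exact Finset.sum_congr rfl fun i _ => by ring

theorem re_map_ofReal_mulVec (p : Matrix m ι ℝ) (v : ι → ℂ) :
    re ∘ (p.map ofReal *ᵥ v) = p *ᵥ (re ∘ v) := by
  ext i
  simp [mulVec, dotProduct, re_sum]

theorem im_map_ofReal_mulVec (p : Matrix m ι ℝ) (v : ι → ℂ) :
    im ∘ (p.map ofReal *ᵥ v) = p *ᵥ (im ∘ v) := by
  ext i
  simp [mulVec, dotProduct, im_sum]

end Complex

end BilinearDotProduct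

theorem so4_equiv_iff_bilinear_eq (v w : Fin 4 → ℂ)
    (hv : ∑ i, ‖v i‖ ^ 2 = 1) (hw : ∑ i, ‖w i‖ ^ 2 = 1) :
    (∃ p : Matrix (Fin 4) (Fin 4) ℝ, pᵀ * p = 1 ∧ p.det = 1 ∧
        (p.map Complex.ofReal).mulVec v = w) ↔ v ⬝ᵥ v = w ⬝ᵥ w := by
  constructor
  · rintro ⟨p, hp, -, rfl⟩
    exact (dotProduct_mulVec_self_of_transpose_mul_self_eq_one
      (transpose_map_mul_map_eq_one Complex.ofRealHom hp) v).symm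
  · intro hvw
    have hre := congrArg Complex.re hvw
    have him := congrArg Complex.im hvw
    rw [Complex.re_dotProduct_self, Complex.re_dotProduct_self] at hre
    rw [Complex.im_dotProduct_self, Complex.im_dotProduct_self] at him
    rw [Complex.sum_norm_sq_eq_dotProduct] at hv hw
    obtain ⟨p, hp, hdet, hre_p, him_p⟩ := exists_det_eq_one_mulVec_eq_pair (by norm_num)
      (a := Complex.re ∘ v) (b := Complex.im ∘ v) (c := Complex.re ∘ w) (d := Complex.im ∘ w)
      (by linarith) (by linarith) (by linarith)
    refine ⟨p, hp, hdet, funext fun i => Complex.ext ?_ ?_⟩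
    · exact congrFun ((Complex.re_map_ofReal_mulVec p v).trans hre_p) i
    · exact congrFun ((Complex.im_map_ofReal_mulVec p v).trans him_p) i
end
end

section
/- Every two-qubit unitary maps some separable state to a separable state: for every G ∈ Matrix.unitaryGroup (Fin 2 × Fin 2) ℂ there exists a unit vector φ : Fin 2 × Fin 2 → ℂ with ε(φ) = 0 and ε(G.mulVec φ) = 0. -/
open Matrix Kronecker

noncomputable section

/-!
The product states `(x, y) ⊗ |0⟩` form a plane on which `ε` vanishes, since `ε(a ⊗ b)` factors as
`(aᵀ σy a) (bᵀ σy b)` and `σy` is skew-symmetric. On that plane `φ ↦ ε(G φ)` is a binary quadratic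
form over `ℂ`, so it has a nontrivial zero; normalizing it gives the required state.
-/

section

variable {R m n : Type*} [CommRing R] [Fintype m] [Fintype n]

theorem add_smul_dotProduct_mulVec_add_smul (M : Matrix n n R) (u v : n → R) (x y : R) :
    (x • u + y • v) ⬝ᵥ M *ᵥ (x • u + y • v)
      = x ^ 2 * (u ⬝ᵥ M *ᵥ u) + x * y * (u ⬝ᵥ M *ᵥ v + v ⬝ᵥ M *ᵥ u)
        + y ^ 2 * (v ⬝ᵥ M *ᵥ v) := by
  simp only [mulVec_add, mulVec_smul, add_dotProduct, dotProduct_add, smul_dotProduct,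
    dotProduct_smul, smul_eq_mul]
  ring

theorem smul_dotProduct_mulVec_smul (M : Matrix n n R) (u : n → R) (c : R) :
    (c • u) ⬝ᵥ M *ᵥ (c • u) = c ^ 2 * (u ⬝ᵥ M *ᵥ u) := by
  simp only [mulVec_smul, smul_dotProduct, dotProduct_smul, smul_eq_mul]
  ring

theorem kronecker_mulVec_kronecker (A : Matrix m m R) (B : Matrix n n R) (a : m → R)
    (b : n → R) :
    (A ⊗ₖ B) *ᵥ (fun p : m × n => a p.1 * b p.2) = fun p => (A *ᵥ a) p.1 * (B *ᵥ b) p.2 := by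
  ext p
  simp only [mulVec, dotProduct, Fintype.sum_prod_type, kroneckerMap_apply, Finset.sum_mul_sum]
  exact Finset.sum_congr rfl fun _ _ => Finset.sum_congr rfl fun _ _ => by ring

theorem kronecker_dotProduct_kronecker (a c : m → R) (b d : n → R) :
    (fun p : m × n => a p.1 * b p.2) ⬝ᵥ (fun p => c p.1 * d p.2) = (a ⬝ᵥ c) * (b ⬝ᵥ d) := by
  simp only [dotProduct, Fintype.sum_prod_type, Finset.sum_mul_sum]
  exact Finset.sum_congr rfl fun _ _ => Finset.sum_congr rfl fun _ _ => by ring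

end

theorem exists_ne_zero_binary_quadratic_eq_zero {K : Type*} [Field K] [IsAlgClosed K]
    (a b c : K) : ∃ x y : K, (x, y) ≠ 0 ∧ a * x ^ 2 + b * x * y + c * y ^ 2 = 0 := by
  by_cases ha : a = 0
  · exact ⟨1, 0, by simp, by simp [ha]⟩
  obtain ⟨x, hx⟩ := IsAlgClosed.exists_root _ (by
    rw [Polynomial.degree_quadratic (b := b) (c := c) ha]; decide)
  refine ⟨x, 1, by simp, ?_⟩
  simpa using hx

theorem exists_smul_sum_norm_sq_eq_one {ι : Type*} [Fintype ι] {φ : ι → ℂ} (hφ : φ ≠ 0) :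
    ∃ c : ℂ, ∑ i, ‖(c • φ) i‖ ^ 2 = 1 := by
  have hsum (ψ : ι → ℂ) : ∑ i, ‖ψ i‖ ^ 2 = ‖WithLp.toLp 2 ψ‖ ^ 2 := by
    rw [EuclideanSpace.norm_sq_eq]
  have hne : ‖WithLp.toLp 2 φ‖ ≠ 0 := by simpa using hφ
  refine ⟨(‖WithLp.toLp 2 φ‖ : ℂ)⁻¹, ?_⟩
  rw [hsum, WithLp.toLp_smul, norm_smul, norm_inv, Complex.norm_real, norm_norm,
    inv_mul_cancel₀ hne, one_pow]

theorem dotProduct_σy_mulVec_self (b : Fin 2 → ℂ) : b ⬝ᵥ σy *ᵥ b = 0 := by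
  simp only [σy, dotProduct, mulVec, of_apply, cons_val', cons_val_fin_one, Fin.sum_univ_two,
    cons_val_zero, cons_val_one]
  ring

theorem eps_kronecker (a b : Fin 2 → ℂ) : eps (fun p => a p.1 * b p.2) = 0 := by
  rw [eps, kronecker_mulVec_kronecker, kronecker_dotProduct_kronecker,
    dotProduct_σy_mulVec_self, zero_mul]

theorem eps_smul (c : ℂ) (φ : Fin 2 × Fin 2 → ℂ) : eps (c • φ) = c ^ 2 * eps φ :=
  smul_dotProduct_mulVec_smul _ φ c

theorem maps_some_separable_to_separable_general
    (G : Matrix (Fin 2 × Fin 2) (Fin 2 × Fin 2) ℂ) :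
    ∃ φ : Fin 2 × Fin 2 → ℂ, (∑ p, ‖φ p‖ ^ 2 = 1) ∧ eps φ = 0 ∧
      eps (G.mulVec φ) = 0 := by
  set u := G *ᵥ e 0 0
  set v := G *ᵥ e 1 0
  obtain ⟨x, y, hxy, hq⟩ := exists_ne_zero_binary_quadratic_eq_zero
    (eps u) (u ⬝ᵥ (σy ⊗ₖ σy) *ᵥ v + v ⬝ᵥ (σy ⊗ₖ σy) *ᵥ u) (eps v)
  set φ₀ := x • e 0 0 + y • e 1 0
  have hφ₀ : φ₀ = fun p => ![x, y] p.1 * (Pi.single 0 1 : Fin 2 → ℂ) p.2 := by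
    ext ⟨i, j⟩; fin_cases i <;> fin_cases j <;> simp [φ₀, e]
  have hφ₀_ne : φ₀ ≠ 0 := fun h => hxy <| by
    simpa [φ₀, e] using And.intro (congrFun h (0, 0)) (congrFun h (1, 0))
  have hGφ₀ : eps (G *ᵥ φ₀) = 0 := by
    rw [mulVec_add, mulVec_smul, mulVec_smul, eps, add_smul_dotProduct_mulVec_add_smul]
    unfold eps at hq
    linear_combination hq
  obtain ⟨c, hc⟩ := exists_smul_sum_norm_sq_eq_one hφ₀_ne
  refine ⟨c • φ₀, hc, ?_, ?_⟩
  · rw [eps_smul, hφ₀, eps_kronecker, mul_zero]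
  · rw [mulVec_smul, eps_smul, hGφ₀, mul_zero]

theorem maps_some_separable_to_separable
    (G : Matrix (Fin 2 × Fin 2) (Fin 2 × Fin 2) ℂ)
    (hG : G ∈ Matrix.unitaryGroup (Fin 2 × Fin 2) ℂ) :
    ∃ φ : Fin 2 × Fin 2 → ℂ, (∑ p, ‖φ p‖ ^ 2 = 1) ∧ eps φ = 0 ∧
      eps (G.mulVec φ) = 0 :=
  maps_some_separable_to_separable_general G
end
end

section
/- For every two-qubit unit vector φ : Fin 2 × Fin 2 → ℂ there exists c ∈ Matrix.unitaryGroup (Fin 2) ℂ with det c = 1 such that ε((CNOT * (1 ⊗ c)).mulVec φ) = 0, i.e. a single one-qubit gate followed by a CNOT disentangles any two-qubit state. -/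
open Matrix Kronecker

noncomputable section

/-!
With `Q(x, y) = (φ₀₀ x + φ₀₁ y)(φ₁₀ x + φ₁₁ y)` (`cnotForm φ`), `ε(CNOT (1 ⊗ c) φ)` vanishes
exactly when `Q` takes the same value on the two rows of `c`. Try
`c = [[z cos t, z sin t], [-z̄ sin t, z̄ cos t]]` with `|z| = 1`: the rows give `z² Q(cos t, sin t)` and
`z̄² Q(-sin t, cos t)`. As `t ↦ |Q(cos t, sin t)|` is `π`-periodic, the intermediate value theorem
gives a `t` where both values have the same modulus, and a fourth root `z` of their ratio
makes them equal.
-/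

theorem Function.Periodic.exists_apply_add_eq_apply {g : ℝ → ℝ} {p : ℝ}
    (hper : Function.Periodic g (2 * p)) (hg : Continuous g) : ∃ t, g (t + p) = g t := by
  set h : ℝ → ℝ := fun t => g (t + p) - g t
  have h_antiperiodic : h p = -h 0 := by
    have h2p : g (2 * p) = g 0 := by simpa using hper 0
    simp only [h, ← two_mul, h2p, zero_add]
    ring
  have h_zero_mem : (0 : ℝ) ∈ Set.uIcc (h 0) (h p) := by
    rw [h_antiperiodic, Set.mem_uIcc]
    rcases le_total (h 0) 0 with h0 | h0 <;> [left; right] <;> constructor <;> linarith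
  obtain ⟨t, -, ht⟩ := intermediate_value_uIcc (by fun_prop : Continuous h).continuousOn h_zero_mem
  exact ⟨t, sub_eq_zero.mp ht⟩

theorem Complex.exists_norm_eq_one_pow_mul_eq {u v : ℂ} (huv : ‖u‖ = ‖v‖) {n : ℕ} (hn : 0 < n) :
    ∃ z : ℂ, ‖z‖ = 1 ∧ z ^ n * u = v := by
  rcases eq_or_ne u 0 with rfl | hu
  · exact ⟨1, norm_one, by simpa [eq_comm] using huv⟩
  obtain ⟨z, hz⟩ := IsAlgClosed.exists_pow_nat_eq (v / u) hn
  refine ⟨z, ?_, by rw [hz, div_mul_cancel₀ v hu]⟩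
  have hz_norm_pow : ‖z‖ ^ n = 1 := by
    rw [← norm_pow, hz, norm_div, ← huv, div_self (norm_ne_zero_iff.mpr hu)]
  exact (pow_eq_one_iff_of_nonneg (norm_nonneg z) hn.ne').mp hz_norm_pow

theorem Matrix.of_mem_specialUnitaryGroup_fin_two {α : Type*} [CommRing α] [StarRing α] {a b : α}
    (hab : star a * a + star b * b = 1) :
    !![a, b; -star b, star a] ∈ specialUnitaryGroup (Fin 2) α := by
  refine ⟨?_, ?_⟩
  · rw [SetLike.mem_coe, mem_unitaryGroup_iff, ← Matrix.ext_iff]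
    intro i j
    fin_cases i <;> fin_cases j <;> simp [Matrix.mul_apply, Fin.sum_univ_two] <;> grind
  · simpa [det_fin_two_of, mul_comm] using hab

theorem Matrix.one_kronecker_mulVec_apply {R ι κ : Type*} [Semiring R] [Fintype ι] [Fintype κ]
    [DecidableEq ι] (c : Matrix κ κ R) (φ : ι × κ → R) (i : ι) (j : κ) :
    ((1 ⊗ₖ c) *ᵥ φ) (i, j) = ∑ l, c j l * φ (i, l) := by
  simp [mulVec, dotProduct, Fintype.sum_prod_type, one_apply]

theorem eps_eq (ψ : Fin 2 × Fin 2 → ℂ) :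
    eps ψ = 2 * (ψ (0, 1) * ψ (1, 0) - ψ (0, 0) * ψ (1, 1)) := by
  simp [eps, σy, dotProduct, mulVec, Fintype.sum_prod_type, Fin.sum_univ_two]
  ring

theorem CNOT_mulVec_apply (ψ : Fin 2 × Fin 2 → ℂ) (i j : Fin 2) :
    (CNOT *ᵥ ψ) (i, j) = ψ (i, j - i) := by
  fin_cases i <;> fin_cases j <;>
    simp [CNOT, mulVec, dotProduct, Fintype.sum_prod_type, show (-1 : Fin 2) = 1 from rfl]

def cnotForm (φ : Fin 2 × Fin 2 → ℂ) (x y : ℂ) : ℂ :=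
  (φ (0, 0) * x + φ (0, 1) * y) * (φ (1, 0) * x + φ (1, 1) * y)

theorem cnotForm_mul (φ : Fin 2 × Fin 2 → ℂ) (a x y : ℂ) :
    cnotForm φ (a * x) (a * y) = a ^ 2 * cnotForm φ x y := by
  unfold cnotForm
  ring

theorem cnotForm_neg (φ : Fin 2 × Fin 2 → ℂ) (x y : ℂ) : cnotForm φ (-x) (-y) = cnotForm φ x y := by
  unfold cnotForm
  ring

theorem eps_CNOT_mul_one_kronecker_mulVec (φ : Fin 2 × Fin 2 → ℂ) (c : Matrix (Fin 2) (Fin 2) ℂ) :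
    eps ((CNOT * ((1 : Matrix (Fin 2) (Fin 2) ℂ) ⊗ₖ c)) *ᵥ φ) =
      2 * (cnotForm φ (c 1 0) (c 1 1) - cnotForm φ (c 0 0) (c 0 1)) := by
  simp only [← mulVec_mulVec, eps_eq, CNOT_mulVec_apply, one_kronecker_mulVec_apply,
    Fin.sum_univ_two, cnotForm, sub_zero, show (1 - 1 : Fin 2) = 0 from rfl,
    show (0 - 1 : Fin 2) = 1 from rfl]
  ring

open Real in
theorem disentangle_one_cnot_general (φ : Fin 2 × Fin 2 → ℂ) :
    ∃ c ∈ Matrix.unitaryGroup (Fin 2) ℂ, c.det = 1 ∧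
      eps ((CNOT * ((1 : Matrix (Fin 2) (Fin 2) ℂ) ⊗ₖ c)).mulVec φ) = 0 := by
  have hper : Function.Periodic (fun t => ‖cnotForm φ (cos t) (sin t)‖) (2 * (π / 2)) := fun t => by
    simp only [mul_div_cancel₀ π two_ne_zero, cos_add_pi, sin_add_pi, Complex.ofReal_neg,
      cnotForm_neg]
  obtain ⟨t, ht⟩ := hper.exists_apply_add_eq_apply (by unfold cnotForm; fun_prop)
  simp only [cos_add_pi_div_two, sin_add_pi_div_two, Complex.ofReal_neg] at ht
  obtain ⟨z, hz, hzQ⟩ := Complex.exists_norm_eq_one_pow_mul_eq ht.symm four_pos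
  have hz_conj : starRingEnd ℂ z * z = 1 := by simp [Complex.conj_mul', hz]
  have hSU := of_mem_specialUnitaryGroup_fin_two (a := z * cos t) (b := z * sin t) (by
    simp only [star_mul', Complex.star_def, Complex.conj_ofReal]
    linear_combination (cos t ^ 2 + sin t ^ 2 : ℂ) * hz_conj +
      (by norm_cast; exact cos_sq_add_sin_sq t : (cos t : ℂ) ^ 2 + sin t ^ 2 = 1))
  refine ⟨_, hSU.1, hSU.2, ?_⟩
  simp only [eps_CNOT_mul_one_kronecker_mulVec, of_apply, cons_val', cons_val_zero, cons_val_one,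
    empty_val', cons_val_fin_one, star_mul', Complex.star_def, Complex.conj_ofReal, ← mul_neg,
    cnotForm_mul]
  rw [← hzQ]
  linear_combination 2 * z ^ 2 * cnotForm φ (cos t) (sin t) * (starRingEnd ℂ z * z + 1) * hz_conj

theorem disentangle_one_cnot (φ : Fin 2 × Fin 2 → ℂ) (hφ : ∑ p, ‖φ p‖ ^ 2 = 1) :
    ∃ c ∈ Matrix.unitaryGroup (Fin 2) ℂ, c.det = 1 ∧
      eps ((CNOT * ((1 : Matrix (Fin 2) (Fin 2) ℂ) ⊗ₖ c)).mulVec φ) = 0 :=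
  disentangle_one_cnot_general φ
end
end

section
/- For every two-qubit unitary u ∈ Matrix.unitaryGroup (Fin 2 × Fin 2) ℂ there exist a, b, c ∈ Matrix.unitaryGroup (Fin 2) ℂ such that the matrix (a ⊗ b) * CNOT * (1 ⊗ c) agrees with u in its entire (0,0)-th row: for all q : Fin 2 × Fin 2, ((a ⊗ b) * CNOT * (1 ⊗ c)) (0,0) q = u (0,0) q. (Hence one CNOT suffices to simulate any two-qubit operator up to a projective measurement onto span(|00⟩) and its orthogonal complement.) -/
open Matrix Kronecker

noncomputable section

/-!
Row `(0,0)` of `(a ⊗ b) * CNOT * (1 ⊗ c)`, read as a `2 × 2` matrix, is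
`diagonal (a 0) * circulant (b 0) * c`. Two square matrices `X`, `Y` with `X Xᴴ = Y Yᴴ` satisfy
`X = Y C` for a unitary `C`: the rows have the same Gram matrix, so the isometry between their
spans extends to a unitary. It remains to match the Gram matrix of the rows `x₀, x₁` of the target
row by `Y = diagonal α * circulant ![p, q]` with `p, q` real. The off-diagonal entry of `Y Yᴴ` is
`α₀ ᾱ₁ · 2pq`, and `2pq` ranges over `[0, 1]`, which by Cauchy–Schwarz contains
`|⟪x₁, x₀⟫| / (‖x₀‖ ‖x₁‖)`; the phase of `⟪x₁, x₀⟫` is carried by `α₀`.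
-/

open scoped ComplexConjugate InnerProductSpace

section

variable {𝕜 : Type*} [RCLike 𝕜]

theorem exists_linearIsometryEquiv_apply_eq_of_inner_eq {E ι : Type*} [NormedAddCommGroup E]
    [InnerProductSpace 𝕜 E] [FiniteDimensional 𝕜 E] [Fintype ι] {v w : ι → E}
    (h : ∀ i j, ⟪v i, v j⟫_𝕜 = ⟪w i, w j⟫_𝕜) : ∃ U : E ≃ₗᵢ[𝕜] E, ∀ i, U (v i) = w i := by
  classical
  set f := Fintype.linearCombination 𝕜 v
  set g := Fintype.linearCombination 𝕜 w
  have hfg (c : ι → 𝕜) : ‖f c‖ = ‖g c‖ := by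
    have : ⟪f c, f c⟫_𝕜 = ⟪g c, g c⟫_𝕜 := by
      simp only [f, g, Fintype.linearCombination_apply, sum_inner, inner_sum, inner_smul_left,
        inner_smul_right, h]
    rw [@norm_eq_sqrt_re_inner 𝕜, @norm_eq_sqrt_re_inner 𝕜, this]
  -- `g` vanishes on the kernel of `f`, so `g ∘ s` does not depend on the right inverse `s`
  obtain ⟨s, hs⟩ := f.rangeRestrict.exists_rightInverse_of_surjective f.range_rangeRestrict
  have hfs (x) : f (s x) = x := congrArg Subtype.val (LinearMap.congr_fun hs x)
  have hgs (c) : g (s ⟨f c, LinearMap.mem_range_self f c⟩) = g c := by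
    rw [← sub_eq_zero, ← map_sub, ← norm_eq_zero, ← hfg, map_sub, hfs, sub_self, norm_zero]
  let L : LinearMap.range f →ₗᵢ[𝕜] E :=
    { toLinearMap := g ∘ₗ s
      norm_map' := fun x => by simp [← hfg, hfs] }
  refine ⟨L.extend.toLinearIsometryEquiv rfl, fun i => ?_⟩
  have hv : v i = f (Pi.single i 1) := by simp [f]
  have hw : w i = g (Pi.single i 1) := by simp [g]
  rw [LinearIsometry.coe_toLinearIsometryEquiv, hv, hw, ← hgs]
  exact L.extend_apply ⟨f (Pi.single i 1), LinearMap.mem_range_self f _⟩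

variable {n : Type*} [Fintype n]

theorem mul_conjTranspose_apply_eq_inner (X : Matrix n n 𝕜) (i j : n) :
    (X * Xᴴ) i j = ⟪WithLp.toLp 2 (X j), WithLp.toLp 2 (X i)⟫_𝕜 := by
  simp [Matrix.mul_apply, PiLp.inner_apply]

theorem exists_mem_unitaryGroup_mul_eq_of_mul_conjTranspose_eq [DecidableEq n]
    {X Y : Matrix n n 𝕜} (h : X * Xᴴ = Y * Yᴴ) :
    ∃ C ∈ unitaryGroup n 𝕜, Y * C = X := by
  obtain ⟨U, hU⟩ := exists_linearIsometryEquiv_apply_eq_of_inner_eq (𝕜 := 𝕜)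
    (v := fun i => WithLp.toLp 2 (Y i)) (w := fun i => WithLp.toLp 2 (X i)) fun i j => by
      rw [← mul_conjTranspose_apply_eq_inner, ← mul_conjTranspose_apply_eq_inner, h]
  let C : Matrix n n 𝕜 := Matrix.of fun k => (U (EuclideanSpace.single k 1)).ofLp
  have hC (k : n) : WithLp.toLp 2 (C k) = U (EuclideanSpace.single k 1) := rfl
  refine ⟨C, ?_, ?_⟩
  · rw [mem_unitaryGroup_iff]
    ext i j
    rw [star_eq_conjTranspose, mul_conjTranspose_apply_eq_inner, hC, hC,
      LinearIsometryEquiv.inner_map_map, EuclideanSpace.inner_single_left]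
    simp [Matrix.one_apply, eq_comm]
  · ext i j
    have hY : WithLp.toLp 2 (Y i) = ∑ k, Y i k • EuclideanSpace.single k (1 : 𝕜) := by
      ext k
      simp [Finset.sum_apply, Pi.single_apply]
    rw [← WithLp.ofLp_toLp 2 (X i), ← hU i, hY]
    simp [Matrix.mul_apply, C]

theorem of_fin_two_mem_unitaryGroup {x y : 𝕜} (h : ‖x‖ ^ 2 + ‖y‖ ^ 2 = 1) :
    !![x, y; -conj y, conj x] ∈ unitaryGroup (Fin 2) 𝕜 := by
  have h' : x * conj x + y * conj y = 1 := by
    rw [RCLike.mul_conj, RCLike.mul_conj]; exact_mod_cast h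
  rw [mem_unitaryGroup_iff]
  ext i j
  fin_cases i <;> fin_cases j <;> simp [Matrix.mul_apply]
  · exact h'
  · ring
  · ring
  · linear_combination h'

end

theorem cnot_sandwich_row_zero_apply (a b c : Matrix (Fin 2) (Fin 2) ℂ) (i j : Fin 2) :
    ((a ⊗ₖ b) * CNOT * ((1 : Matrix (Fin 2) (Fin 2) ℂ) ⊗ₖ c)) (0, 0) (i, j) =
      (diagonal (a 0) * circulant (b 0) * c) i j := by
  simp only [Matrix.mul_apply, CNOT, Fintype.sum_prod_type, Fin.sum_univ_two,
    Matrix.kroneckerMap_apply, Matrix.one_apply, Matrix.of_apply, diagonal_apply, circulant_apply]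
  have hneg : (-1 : Fin 2) = 1 := rfl
  fin_cases i <;> simp [hneg]

theorem exists_mul_conjTranspose_eq_diagonal_mul_circulant (X : Matrix (Fin 2) (Fin 2) ℂ)
    (hX : (X * Xᴴ).trace = 1) :
    ∃ α₀ α₁ : ℂ, ∃ p q : ℝ, ‖α₀‖ ^ 2 + ‖α₁‖ ^ 2 = 1 ∧ p ^ 2 + q ^ 2 = 1 ∧
      X * Xᴴ = (diagonal ![α₀, α₁] * circulant ![(p : ℂ), q]) *
        (diagonal ![α₀, α₁] * circulant ![(p : ℂ), q])ᴴ := by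
  set r₀ := WithLp.toLp 2 (X 0)
  set r₁ := WithLp.toLp 2 (X 1)
  set z := ⟪r₁, r₀⟫_ℂ
  have hz : ‖z‖ ≤ ‖r₀‖ * ‖r₁‖ := (norm_inner_le_norm r₁ r₀).trans_eq (mul_comm _ _)
  set t := ‖z‖ / (‖r₀‖ * ‖r₁‖)
  have ht : 0 ≤ t ∧ t ≤ 1 := ⟨by positivity, div_le_one_of_le₀ hz (by positivity)⟩
  obtain ⟨p, q, hpq, h2pq⟩ : ∃ p q : ℝ, p ^ 2 + q ^ 2 = 1 ∧ 2 * p * q = t := by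
    refine ⟨Real.cos (Real.arcsin t / 2), Real.sin (Real.arcsin t / 2),
      Real.cos_sq_add_sin_sq _, ?_⟩
    rw [mul_right_comm, ← Real.sin_two_mul, mul_div_cancel₀ _ two_ne_zero,
      Real.sin_arcsin (by linarith) ht.2]
  obtain ⟨ω, hω, hωz⟩ : ∃ ω : ℂ, ‖ω‖ = 1 ∧ ((‖r₀‖ * ‖r₁‖ * t : ℝ) : ℂ) * ω = z := by
    refine ⟨Complex.exp (Complex.arg z * Complex.I), Complex.norm_exp_ofReal_mul_I _, ?_⟩
    rcases eq_or_ne (‖r₀‖ * ‖r₁‖) 0 with h0 | h0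
    · rw [h0, zero_mul, Complex.ofReal_zero, zero_mul, norm_le_zero_iff.mp (hz.trans_eq h0)]
    · rw [mul_div_cancel₀ _ h0]
      exact Complex.norm_mul_exp_arg_mul_I z
  have hωω : ω * conj ω = 1 := by rw [Complex.mul_conj', hω]; norm_num
  have hpqC : (p : ℂ) ^ 2 + (q : ℂ) ^ 2 = 1 := by exact_mod_cast hpq
  have hzC : (‖r₀‖ * ‖r₁‖ * (2 * p * q) : ℂ) * ω = z := by
    rw [← hωz, ← h2pq]; push_cast; ring
  have hzC' : (‖r₀‖ * ‖r₁‖ * (2 * p * q) : ℂ) * conj ω = ⟪r₀, r₁⟫_ℂ := by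
    simpa [Complex.conj_ofReal, map_ofNat, z] using congrArg conj hzC
  have hnorm (r : EuclideanSpace ℂ (Fin 2)) : ⟪r, r⟫_ℂ = (‖r‖ : ℂ) ^ 2 :=
    inner_self_eq_norm_sq_to_K r
  refine ⟨‖r₀‖ * ω, ‖r₁‖, p, q, ?_, hpq, ?_⟩
  · rw [trace_fin_two, mul_conjTranspose_apply_eq_inner, mul_conjTranspose_apply_eq_inner, hnorm,
      hnorm] at hX
    have hX' : ‖r₀‖ ^ 2 + ‖r₁‖ ^ 2 = 1 := by exact_mod_cast hX
    simpa [norm_mul, hω] using hX'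
  · ext i j
    rw [mul_conjTranspose_apply_eq_inner]
    fin_cases i <;> fin_cases j <;> simp [Matrix.mul_apply, circulant_apply]
    · linear_combination (-(‖r₀‖ : ℂ) ^ 2 * (p ^ 2 + q ^ 2)) * hωω - (‖r₀‖ : ℂ) ^ 2 * hpqC
    · linear_combination -hzC
    · linear_combination -hzC'
    · linear_combination -(‖r₁‖ : ℂ) ^ 2 * hpqC

theorem one_cnot_first_row (u : Matrix (Fin 2 × Fin 2) (Fin 2 × Fin 2) ℂ)
    (hu : u ∈ Matrix.unitaryGroup (Fin 2 × Fin 2) ℂ) :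
    ∃ a ∈ Matrix.unitaryGroup (Fin 2) ℂ, ∃ b ∈ Matrix.unitaryGroup (Fin 2) ℂ,
      ∃ c ∈ Matrix.unitaryGroup (Fin 2) ℂ,
        ∀ q : Fin 2 × Fin 2,
          ((a ⊗ₖ b) * CNOT * ((1 : Matrix (Fin 2) (Fin 2) ℂ) ⊗ₖ c)) (0, 0) q =
            u (0, 0) q := by
  set X : Matrix (Fin 2) (Fin 2) ℂ := Matrix.of fun i j => u (0, 0) (i, j)
  have hX : (X * Xᴴ).trace = 1 := by
    have := congrFun (congrFun (mem_unitaryGroup_iff.mp hu) (0, 0)) (0, 0)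
    simpa [trace, Matrix.mul_apply, Fintype.sum_prod_type, X] using this
  obtain ⟨α₀, α₁, p, q, hα, hpq, hgram⟩ := exists_mul_conjTranspose_eq_diagonal_mul_circulant X hX
  obtain ⟨c, hc, hYc⟩ := exists_mem_unitaryGroup_mul_eq_of_mul_conjTranspose_eq hgram
  refine ⟨!![α₀, α₁; -conj α₁, conj α₀], of_fin_two_mem_unitaryGroup hα,
    !![(p : ℂ), q; -conj (q : ℂ), conj (p : ℂ)], of_fin_two_mem_unitaryGroup (by simpa using hpq),
    c, hc, fun ⟨i, j⟩ => ?_⟩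
  rw [cnot_sandwich_row_zero_apply]
  exact congrFun (congrFun hYc i) j
end
end

section
/- Entangled states cannot be prepared from |00⟩ by local gates alone: если φ : Fin 2 × Fin 2 → ℂ is a unit vector with ε(φ) ≠ 0, then for all a, b ∈ Matrix.unitaryGroup (Fin 2) ℂ, (a ⊗ b).mulVec e₀ ≠ φ. -/
open Matrix Kronecker

noncomputable section

theorem entangled_not_locally_preparable (φ : Fin 2 × Fin 2 → ℂ)
    (hφ : ∑ p, ‖φ p‖ ^ 2 = 1) (hent : eps φ ≠ 0) :
    ∀ a ∈ Matrix.unitaryGroup (Fin 2) ℂ, ∀ b ∈ Matrix.unitaryGroup (Fin 2) ℂ,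
      (a ⊗ₖ b).mulVec e₀ ≠ φ := by
  intro a _ b _ h
  apply hent
  rw [← h]
  simp only [eps, e₀, e, dotProduct, mulVec, kroneckerMap_apply, σy,
    Fintype.sum_prod_type, Fin.sum_univ_two, Pi.single_apply, Prod.mk.injEq]
  norm_num
  ring
end
end

section
/- One CNOT does not suffice up to measurement of the first qubit: there exists a two-qubit unitary u ∈ Matrix.unitaryGroup (Fin 2 × Fin 2) ℂ such that for all a, b, c, d, v₀, v₁ ∈ Matrix.unitaryGroup (Fin 2) ℂ, u ≠ (E₀₀ ⊗ v₀ + E₁₁ ⊗ v₁) * (c ⊗ d) * CNOT * (a ⊗ b), where E₀₀, E₁₁ : Matrix (Fin 2) (Fin 2) ℂ are the standard matrix units at positions (0,0) and (1,1) (so E₀₀ ⊗ v₀ + E₁₁ ⊗ v₁ is the general block-diagonal unitary preserving span{|00⟩,|01⟩} and span{|10⟩,|11⟩}). -/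
open Matrix Kronecker

noncomputable section

/-! The form `eps φ = φᵀ (σy ⊗ σy) φ` (minus twice the determinant of `φ` read as a 2 × 2
matrix) scales by `det p * det q` under local gates `p ⊗ q`. In `V (c ⊗ d) CNOT (a ⊗ b)` the
block-diagonal `V` turns the row `(0, j)` into the product vector `c 0 ⊗ w j` with `w = v₀ d`
unitary, and `CNOT` then gives `eps = det a * det b * 2 c₀₀ c₀₁ * (w j 1 ^ 2 - w j 0 ^ 2)`.
For unitary `w`, `w 1 1 ^ 2 - w 1 0 ^ 2 = -(det w) ^ 2 * conj (w 0 1 ^ 2 - w 0 0 ^ 2)`, so `eps`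
vanishes on row `(0, 0)` iff it vanishes on row `(0, 1)`. A reflection mixing `|00⟩` with `|11⟩`
and fixing `|01⟩` violates this. -/

section Kronecker

variable {R m n m' n' : Type*} [CommSemiring R]

def vecKronecker (x : m → R) (y : n → R) : m × n → R := fun r => x r.1 * y r.2

theorem vecKronecker_vecMul_kronecker [Fintype m] [Fintype n] (x : m → R) (y : n → R)
    (p : Matrix m m' R) (q : Matrix n n' R) :
    vecKronecker x y ᵥ* (p ⊗ₖ q) = vecKronecker (x ᵥ* p) (y ᵥ* q) := by
  ext r
  simp only [vecKronecker, vecMul, dotProduct, Fintype.sum_prod_type, kroneckerMap_apply,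
    Finset.sum_mul_sum]
  exact Finset.sum_congr rfl fun _ _ => Finset.sum_congr rfl fun _ _ => by ring

theorem single_kronecker_add_single_kronecker_apply [DecidableEq m] {i k : m} (hik : i ≠ k)
    (v w : Matrix n n R) (j : n) :
    (single i i (1 : R) ⊗ₖ v + single k k 1 ⊗ₖ w : Matrix (m × n) (m × n) R) (i, j) =
      vecKronecker (Pi.single i 1) (v j) := by
  ext ⟨r, s⟩
  simp [vecKronecker, single_apply, Pi.single_apply, hik, eq_comm]

end Kronecker

theorem mul_σy_mul_transpose (p : Matrix (Fin 2) (Fin 2) ℂ) : p * σy * pᵀ = p.det • σy := by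
  ext i j
  fin_cases i <;> fin_cases j <;> simp [σy, mul_apply, Fin.sum_univ_two, det_fin_two] <;> ring

theorem eps_vecMul_kronecker (φ : Fin 2 × Fin 2 → ℂ) (p q : Matrix (Fin 2) (Fin 2) ℂ) :
    eps (φ ᵥ* (p ⊗ₖ q)) = p.det * q.det * eps φ := by
  have hconj : (p ⊗ₖ q) * (σy ⊗ₖ σy) * (p ⊗ₖ q)ᵀ = (p.det * q.det) • (σy ⊗ₖ σy) := by
    rw [← kroneckerMap_transpose, ← mul_kronecker_mul, ← mul_kronecker_mul,
      mul_σy_mul_transpose, mul_σy_mul_transpose, smul_kronecker, kronecker_smul, smul_smul]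
  rw [eps, dotProduct_mulVec, vecMul_vecMul, ← dotProduct_mulVec, ← mulVec_transpose,
    mulVec_mulVec, hconj, smul_mulVec, dotProduct_smul, smul_eq_mul, eps]

theorem eps_vecKronecker_vecMul_CNOT (x y : Fin 2 → ℂ) :
    eps (vecKronecker x y ᵥ* CNOT) = 2 * (x 0 * x 1) * (y 1 ^ 2 - y 0 ^ 2) := by
  simp [eps, CNOT, vecKronecker, vecMul, mulVec, dotProduct, Fintype.sum_prod_type,
    Fin.sum_univ_two, σy]
  ring

theorem eps_row_blockDiagonal_mul_kronecker_mul_CNOT_mul_kronecker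
    (a b c d v₀ v₁ : Matrix (Fin 2) (Fin 2) ℂ) (j : Fin 2) :
    eps (((single 0 0 1 ⊗ₖ v₀ + single 1 1 1 ⊗ₖ v₁) * (c ⊗ₖ d) * CNOT * (a ⊗ₖ b) :
      Matrix (Fin 2 × Fin 2) (Fin 2 × Fin 2) ℂ) (0, j)) =
      a.det * b.det * (2 * (c 0 0 * c 0 1)) * ((v₀ * d) j 1 ^ 2 - (v₀ * d) j 0 ^ 2) := by
  rw [mul_apply_eq_vecMul, mul_apply_eq_vecMul, mul_apply_eq_vecMul,
    single_kronecker_add_single_kronecker_apply zero_ne_one, vecKronecker_vecMul_kronecker,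
    eps_vecMul_kronecker, single_one_vecMul, eps_vecKronecker_vecMul_CNOT]
  simp only [row, mul_apply_eq_vecMul]
  ring

theorem adjugate_eq_det_smul_star {n : Type*} [Fintype n] [DecidableEq n] {w : Matrix n n ℂ}
    (hw : w ∈ unitaryGroup n ℂ) : adjugate w = w.det • star w := by
  rw [← Matrix.mul_one (adjugate w), ← mem_unitaryGroup_iff.mp hw, ← Matrix.mul_assoc,
    adjugate_mul, smul_mul, Matrix.one_mul]

theorem sq_sub_sq_row_one_of_mem_unitaryGroup {w : Matrix (Fin 2) (Fin 2) ℂ}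
    (hw : w ∈ unitaryGroup (Fin 2) ℂ) :
    w 1 1 ^ 2 - w 1 0 ^ 2 = -(w.det ^ 2 * star (w 0 1 ^ 2 - w 0 0 ^ 2)) := by
  have h := adjugate_eq_det_smul_star hw
  have h11 : w 1 1 = w.det * star (w 0 0) := by simpa [adjugate_fin_two] using congrFun₂ h 0 0
  have h10 : w 1 0 = -(w.det * star (w 0 1)) := by
    simpa [adjugate_fin_two, neg_eq_iff_eq_neg] using congrFun₂ h 1 0
  rw [h11, h10, star_sub, star_pow, star_pow]
  ring

theorem eps_row_zero_eq_zero_iff {M : Matrix (Fin 2 × Fin 2) (Fin 2 × Fin 2) ℂ}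
    {a b c d v₀ v₁ : Matrix (Fin 2) (Fin 2) ℂ} (hd : d ∈ unitaryGroup (Fin 2) ℂ)
    (hv₀ : v₀ ∈ unitaryGroup (Fin 2) ℂ)
    (hM : M = (single 0 0 1 ⊗ₖ v₀ + single 1 1 1 ⊗ₖ v₁) * (c ⊗ₖ d) * CNOT * (a ⊗ₖ b)) :
    eps (M (0, 0)) = 0 ↔ eps (M (0, 1)) = 0 := by
  have hw := mul_mem hv₀ hd
  have hdet : (v₀ * d).det ≠ 0 := (isUnit_det_of_left_inverse hw.1).ne_zero
  have hrows : (v₀ * d) 0 1 ^ 2 - (v₀ * d) 0 0 ^ 2 = 0 ↔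
      (v₀ * d) 1 1 ^ 2 - (v₀ * d) 1 0 ^ 2 = 0 := by
    rw [sq_sub_sq_row_one_of_mem_unitaryGroup hw, neg_eq_zero, mul_eq_zero, star_eq_zero,
      or_iff_right (pow_ne_zero 2 hdet)]
  rw [hM, eps_row_blockDiagonal_mul_kronecker_mul_CNOT_mul_kronecker,
    eps_row_blockDiagonal_mul_kronecker_mul_CNOT_mul_kronecker]
  simp only [mul_eq_zero, hrows]

-- `finProdFinEquiv` orders the basis as `|00⟩, |01⟩, |10⟩, |11⟩`.
def reflection₀₀₁₁ : Matrix (Fin 2 × Fin 2) (Fin 2 × Fin 2) ℂ :=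
  reindex finProdFinEquiv.symm finProdFinEquiv.symm
    !![3/5, 0, 0, 4/5; 0, 1, 0, 0; 0, 0, 1, 0; 4/5, 0, 0, -3/5]

theorem reflection₀₀₁₁_mem_unitaryGroup : reflection₀₀₁₁ ∈ unitaryGroup (Fin 2 × Fin 2) ℂ := by
  rw [mem_unitaryGroup_iff]
  ext ⟨i, j⟩ ⟨k, l⟩
  fin_cases i <;> fin_cases j <;> fin_cases k <;> fin_cases l <;>
    simp [reflection₀₀₁₁, mul_apply, Fintype.sum_prod_type, finProdFinEquiv] <;>
    norm_num [Complex.conj_ofNat]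

theorem eps_reflection₀₀₁₁_row_zero : eps (reflection₀₀₁₁ (0, 0)) = -24 / 25 := by
  norm_num [eps, reflection₀₀₁₁, dotProduct, mulVec, Fintype.sum_prod_type, σy, finProdFinEquiv]

theorem eps_reflection₀₀₁₁_row_one : eps (reflection₀₀₁₁ (0, 1)) = 0 := by
  simp [eps, reflection₀₀₁₁, dotProduct, mulVec, Fintype.sum_prod_type, σy, finProdFinEquiv]

theorem one_cnot_insufficient_first_qubit_measurement :
    ∃ u ∈ Matrix.unitaryGroup (Fin 2 × Fin 2) ℂ,
      ∀ a ∈ Matrix.unitaryGroup (Fin 2) ℂ, ∀ b ∈ Matrix.unitaryGroup (Fin 2) ℂ,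
        ∀ c ∈ Matrix.unitaryGroup (Fin 2) ℂ, ∀ d ∈ Matrix.unitaryGroup (Fin 2) ℂ,
          ∀ v₀ ∈ Matrix.unitaryGroup (Fin 2) ℂ, ∀ v₁ ∈ Matrix.unitaryGroup (Fin 2) ℂ,
            u ≠ (Matrix.single (0 : Fin 2) (0 : Fin 2) (1 : ℂ) ⊗ₖ v₀ +
                  Matrix.single (1 : Fin 2) (1 : Fin 2) (1 : ℂ) ⊗ₖ v₁) *
                (c ⊗ₖ d) * CNOT * (a ⊗ₖ b) := by
  refine ⟨reflection₀₀₁₁, reflection₀₀₁₁_mem_unitaryGroup, ?_⟩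
  intro a _ b _ c _ d hd v₀ hv₀ v₁ _ h
  have hrow := eps_row_zero_eq_zero_iff hd hv₀ h
  rw [eps_reflection₀₀₁₁_row_zero, eps_reflection₀₀₁₁_row_one] at hrow
  norm_num at hrow
end
end
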